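/- arXiv:2401.00408 — 2 statements merged into one kernel-verified Lean document; each statement's English description precedes it below -/
import Mathlib

section
/- For δ ∈ Δ_d, the generalized subresultant R̃_μ(F) = dp(M_μ(F)) lies in the ideal generated by F₀, …, F_n: there exist polynomials H₀, …, H_n with R̃_μ = H₀F₀ + ⋯ + H_nF_n and deg H_i ≤ μ_i − 1. -/
open Polynomial

/-- Determinant polynomial of a `p × q` matrix (meaningful when `p ≤ q`):
`dp M = ∑_{0 ≤ j ≤ q-p} c_j x^j` where `c_j` is the determinant of the square
matrix formed from the first `p-1` columns of `M` together with column `q-j`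
(1-indexed), i.e. column `q-1-j` (0-indexed). -/
noncomputable def dpMat {R : Type*} [CommRing R] {p q : ℕ} (M : Matrix (Fin p) (Fin q) R) :
    Polynomial R :=
  if hq : q = 0 then 0 else
    ∑ j ∈ Finset.range (q - p + 1),
      Polynomial.C
        (Matrix.det (M.submatrix id fun k : Fin p =>
          (⟨min (if (k : ℕ) < p - 1 then (k : ℕ) else q - 1 - j) (q - 1),
            lt_of_le_of_lt (min_le_right _ _)
              (Nat.sub_lt (Nat.pos_of_ne_zero hq) one_pos)⟩ : Fin q))) *
        Polynomial.X ^ j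

/-- Coefficient matrix of a list of polynomials, with `m + 1` columns:
the `(i,j)` entry is the coefficient of `x^(m-j)` in the `i`-th polynomial. -/
noncomputable def cmList {R : Type*} [CommRing R] (L : List (Polynomial R)) (m : ℕ) :
    Matrix (Fin L.length) (Fin (m + 1)) R :=
  fun i j => (L.get i).coeff (m - (j : ℕ))

/-- Determinant polynomial of a list of polynomials. -/
noncomputable def dpList {R : Type*} [CommRing R] (L : List (Polynomial R)) (m : ℕ) :
    Polynomial R :=
  dpMat (cmList L m)

/-- The list `x^(t-1) * P, …, x^0 * P`. -/
noncomputable def shifts {R : Type*} [CommRing R] (P : Polynomial R) (t : ℕ) :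
    List (Polynomial R) :=
  ((List.range t).reverse).map fun j => Polynomial.X ^ j * P

/-- The `k`-subresultant (new indexing) of two polynomials of degrees `d0 ≤ d1`. -/
noncomputable def subres2 {R : Type*} [CommRing R] (F0 F1 : Polynomial R) (d0 d1 k : ℕ) :
    Polynomial R :=
  if k = 0 then Polynomial.C ((F0.coeff d0) ^ (d1 - d0 - 1)) * F0
  else dpList (shifts F0 (d1 - d0 + k) ++ shifts F1 k) (d1 + k - 1)

/-- Principal coefficient `r_k(F₀,F₁) = coeff_{x^(d₀-k)} R_k(F₀,F₁)`. -/
noncomputable def pcsubres2 {R : Type*} [CommRing R] (F0 F1 : Polynomial R) (d0 d1 k : ℕ) : R :=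
  (subres2 F0 F1 d0 d1 k).coeff (d0 - k)

/-- Rows `x^(μ_i - 1) F_i, …, x^0 F_i` stacked for `i = 0, …, n`. -/
noncomputable def rowsList {R : Type*} [CommRing R] {n : ℕ} (F : Fin (n + 1) → Polynomial R)
    (μ : Fin (n + 1) → ℕ) : List (Polynomial R) :=
  (List.finRange (n + 1)).flatMap fun i => shifts (F i) (μ i)

/-- Number of columns `max_{i : μ_i ≠ 0} (d_i + μ_i)` of the stacked coefficient matrix. -/
def numCols {n : ℕ} (d μ : Fin (n + 1) → ℕ) : ℕ :=
  Finset.univ.sup fun i => if μ i = 0 then 0 else d i + μ i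

/-- The generalized Sylvester matrix `M_μ(F)`. -/
noncomputable def genMat {R : Type*} [CommRing R] {n : ℕ} (d : Fin (n + 1) → ℕ)
    (F : Fin (n + 1) → Polynomial R) (μ : Fin (n + 1) → ℕ) :
    Matrix (Fin (rowsList F μ).length) (Fin (numCols d μ - 1 + 1)) R :=
  cmList (rowsList F μ) (numCols d μ - 1)

/-- The generalized subresultant `R̃_μ(F) = dp (M_μ(F))`. -/
noncomputable def Rtilde {R : Type*} [CommRing R] {n : ℕ} (d : Fin (n + 1) → ℕ)
    (F : Fin (n + 1) → Polynomial R) (μ : Fin (n + 1) → ℕ) : Polynomial R :=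
  dpMat (genMat d F μ)

/-- Principal coefficient of `R̃_μ(F)`. -/
noncomputable def rtilde {R : Type*} [CommRing R] {n : ℕ} (d : Fin (n + 1) → ℕ)
    (F : Fin (n + 1) → Polynomial R) (μ : Fin (n + 1) → ℕ) : R :=
  (Rtilde d F μ).coeff (numCols d μ - ∑ i, μ i)

/-- `c(δ)`: number of columns of the coefficient matrix of the blocks for `F₁,…,F_n`. -/
def cdelta {n : ℕ} (d : Fin (n + 1) → ℕ) (δ : Fin n → ℕ) : ℕ :=
  Finset.univ.sup fun i : Fin n => if δ i = 0 then 0 else d i.succ + δ i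

/-- `δ₀ = c(δ) - d₀` if `c(δ) ≥ d₀`, else `1`. -/
def delta0 {n : ℕ} (d : Fin (n + 1) → ℕ) (δ : Fin n → ℕ) : ℕ :=
  if d 0 ≤ cdelta d δ then cdelta d δ - d 0 else 1

/-- The `δ`-subresultant `R_δ(F)` of `F = (F₀,…,F_n)`. -/
noncomputable def Rsub {R : Type*} [CommRing R] {n : ℕ} (d : Fin (n + 1) → ℕ)
    (F : Fin (n + 1) → Polynomial R) (δ : Fin n → ℕ) : Polynomial R :=
  Rtilde d F (Fin.cons (delta0 d δ) δ)

/-- Principal coefficient `r_δ(F) = coeff_{x^(d₀ - |δ|)} R_δ(F)`. -/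
noncomputable def rsub {R : Type*} [CommRing R] {n : ℕ} (d : Fin (n + 1) → ℕ)
    (F : Fin (n + 1) → Polynomial R) (δ : Fin n → ℕ) : R :=
  (Rsub d F δ).coeff (d 0 - ∑ i, δ i)

lemma dpMat_eq_sum {R : Type*} [CommRing R] {p q : ℕ} (hp : 0 < p) (hpq : p ≤ q)
    (M : Matrix (Fin p) (Fin q) R) (P : Fin p → Polynomial R)
    (hco : ∀ (i : Fin p) (t : Fin q), M i t = (P i).coeff (q - 1 - (t : ℕ)))
    (hdg : ∀ i, (P i).natDegree < q) :
    ∃ c : Fin p → R, dpMat M = ∑ i, Polynomial.C (c i) * P i := by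
  obtain ⟨p', rfl⟩ : ∃ p', p = p' + 1 := ⟨p - 1, by omega⟩
  have hq : q ≠ 0 := by omega
  set m : Fin (p' + 1) → R := fun i =>
    (M.submatrix i.succAbove (fun l : Fin p' =>
      (⟨(l : ℕ), l.2.trans (Nat.lt_of_succ_le hpq)⟩ : Fin q))).det with hm
  refine ⟨fun i => (-1 : R) ^ ((i : ℕ) + p') * m i, ?_⟩
  have key : ∀ g : Fin (p' + 1) → Fin q, (∀ l : Fin p', (g l.castSucc : ℕ) = (l : ℕ)) →
      (M.submatrix id g).det
        = ∑ i : Fin (p' + 1), (-1 : R) ^ ((i : ℕ) + p') * M i (g (Fin.last p')) * m i := by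
    intro g hg
    rw [Matrix.det_succ_column _ (Fin.last p')]
    refine Finset.sum_congr rfl fun i _ => ?_
    rw [Fin.val_last, Fin.succAbove_last]
    have hmin : (M.submatrix id g).submatrix i.succAbove Fin.castSucc
        = M.submatrix i.succAbove (fun l : Fin p' =>
            (⟨(l : ℕ), l.2.trans (Nat.lt_of_succ_le hpq)⟩ : Fin q)) := by
      ext a b
      simp only [Matrix.submatrix_apply, id_eq]
      congr 1
      exact Fin.ext (hg b)
    rw [hmin]
    rfl
  -- the vanishing of the high-degree tail
  have hzero : ∀ j, q - p' ≤ j → j < q →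
      ∑ i : Fin (p' + 1), (-1 : R) ^ ((i : ℕ) + p') * m i * (P i).coeff j = 0 := by
    intro j hj1 hj2
    have hu : q - 1 - j < p' := by omega
    set g' : Fin (p' + 1) → Fin q := fun k =>
      if h : (k : ℕ) < p' then ⟨(k : ℕ), by omega⟩ else ⟨q - 1 - j, by omega⟩ with hg'def
    have hg : ∀ l : Fin p', (g' l.castSucc : ℕ) = (l : ℕ) := by
      intro l
      simp [g', l.2]
    have h1 := key g' hg
    have h2 : (M.submatrix id g').det = 0 := by
      apply Matrix.det_zero_of_column_eq
        (i := (⟨q - 1 - j, hu⟩ : Fin p').castSucc) (j := Fin.last p')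
      · simp [Fin.ext_iff]
        omega
      · intro k
        simp only [Matrix.submatrix_apply, id_eq]
        congr 1
        simp [g', hu]
    have h3 : ∀ i : Fin (p' + 1), M i (g' (Fin.last p')) = (P i).coeff j := by
      intro i
      rw [hco]
      congr 1
      simp [g']
      omega
    rw [h1] at h2
    calc ∑ i : Fin (p' + 1), (-1 : R) ^ ((i : ℕ) + p') * m i * (P i).coeff j
        = ∑ i : Fin (p' + 1), (-1 : R) ^ ((i : ℕ) + p') * M i (g' (Fin.last p')) * m i :=
          Finset.sum_congr rfl fun i _ => by rw [h3]; ring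
      _ = 0 := h2
  -- rewrite dpMat via the expansion
  unfold dpMat
  rw [dif_neg hq]
  have hr : q - (p' + 1) + 1 = q - p' := by omega
  rw [hr]
  have step1 : ∀ j ∈ Finset.range (q - p'),
      Polynomial.C (Matrix.det (M.submatrix id fun k : Fin (p' + 1) =>
          (⟨min (if (k : ℕ) < p' + 1 - 1 then (k : ℕ) else q - 1 - j) (q - 1),
            lt_of_le_of_lt (min_le_right _ _)
              (Nat.sub_lt (Nat.pos_of_ne_zero hq) one_pos)⟩ : Fin q))) *
        Polynomial.X ^ j
      = ∑ i : Fin (p' + 1), Polynomial.C ((-1 : R) ^ ((i : ℕ) + p') * m i) *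
          (Polynomial.C ((P i).coeff j) * Polynomial.X ^ j) := by
    intro j hj
    rw [Finset.mem_range] at hj
    rw [key _ ?hg]
    case hg =>
      intro l
      have hl : ((l.castSucc : Fin (p' + 1)) : ℕ) < p' + 1 - 1 := by simpa using l.2
      simp only [hl, if_pos]
      simp only [Fin.coe_castSucc]
      omega
    have hM : ∀ i : Fin (p' + 1), M i (⟨min (if ((Fin.last p' : Fin (p' + 1)) : ℕ) < p' + 1 - 1
          then ((Fin.last p' : Fin (p' + 1)) : ℕ) else q - 1 - j) (q - 1),
          lt_of_le_of_lt (min_le_right _ _)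
            (Nat.sub_lt (Nat.pos_of_ne_zero hq) one_pos)⟩ : Fin q) = (P i).coeff j := by
      intro i
      rw [hco]
      congr 1
      simp
      omega
    rw [map_sum, Finset.sum_mul]
    refine Finset.sum_congr rfl fun i _ => ?_
    rw [hM i]
    simp only [Polynomial.C_mul]
    ring
  rw [Finset.sum_congr rfl step1]
  -- now extend the inner range and fold back the polynomials
  have hRHS : ∀ i : Fin (p' + 1),
      Polynomial.C ((-1 : R) ^ ((i : ℕ) + p') * m i) * P i
        = ∑ j ∈ Finset.range q, Polynomial.C ((-1 : R) ^ ((i : ℕ) + p') * m i) *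
            (Polynomial.C ((P i).coeff j) * Polynomial.X ^ j) := by
    intro i
    conv_lhs => rw [(P i).as_sum_range' q (hdg i)]
    rw [Finset.mul_sum]
    exact Finset.sum_congr rfl fun j _ => by rw [Polynomial.C_mul_X_pow_eq_monomial]
  conv_rhs => rw [Finset.sum_congr rfl fun i _ => hRHS i]
  conv_rhs => rw [Finset.sum_comm]
  have hsplit : Finset.range q = Finset.range (q - p') ∪ Finset.Ico (q - p') q := by
    simp only [Finset.range_eq_Ico]
    exact (Finset.Ico_union_Ico_eq_Ico (by omega) (by omega)).symm
  rw [hsplit, Finset.sum_union (by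
    simp [Finset.disjoint_left, Finset.mem_Ico]
    omega)]
  have htail : ∑ j ∈ Finset.Ico (q - p') q, ∑ i : Fin (p' + 1),
      Polynomial.C ((-1 : R) ^ ((i : ℕ) + p') * m i) *
        (Polynomial.C ((P i).coeff j) * Polynomial.X ^ j) = 0 := by
    refine Finset.sum_eq_zero fun j hj => ?_
    rw [Finset.mem_Ico] at hj
    have : ∑ i : Fin (p' + 1), Polynomial.C ((-1 : R) ^ ((i : ℕ) + p') * m i) *
        (Polynomial.C ((P i).coeff j) * Polynomial.X ^ j)
        = Polynomial.C (∑ i : Fin (p' + 1), (-1 : R) ^ ((i : ℕ) + p') * m i * (P i).coeff j) *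
            Polynomial.X ^ j := by
      rw [map_sum, Finset.sum_mul]
      exact Finset.sum_congr rfl fun i _ => by simp only [Polynomial.C_mul, Polynomial.C_pow]; ring
    rw [this, hzero j hj.1 hj.2, Polynomial.C_0, zero_mul]
  rw [htail, add_zero]

/-- for `μ ∈ Δ_d`, the generalized subresultant `R̃_μ(F) = dp(M_μ(F))` lies
in the ideal generated by `F₀, …, F_n`: there exist `H₀, …, H_n` with
`R̃_μ = H₀F₀ + ⋯ + H_nF_n` and `deg H_i ≤ μ_i - 1` (i.e. `deg H_i < μ_i`). -/
theorem Rtilde_mem_ideal {R : Type*} [CommRing R] {n : ℕ} (d : Fin (n + 1) → ℕ)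
    (F : Fin (n + 1) → Polynomial R) (hdeg : ∀ i, (F i).degree = (d i : ℕ))
    (hd : ∀ i, d 0 ≤ d i) (μ : Fin (n + 1) → ℕ) (hμ0 : 0 < μ 0)
    (hμ : ∑ i, μ i ≤ d 0 + μ 0) :
    ∃ H : Fin (n + 1) → Polynomial R,
      Rtilde d F μ = ∑ i, H i * F i ∧ ∀ i, (H i).degree < ((μ i : ℕ) : WithBot ℕ) := by
  classical
  have hnum0 : d 0 + μ 0 ≤ numCols d μ := by
    have h := Finset.le_sup (f := fun i => if μ i = 0 then 0 else d i + μ i)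
      (Finset.mem_univ (0 : Fin (n + 1)))
    have h2 : (if μ 0 = 0 then 0 else d 0 + μ 0) ≤ numCols d μ := h
    rwa [if_neg (by omega)] at h2
  set L := rowsList F μ with hL
  have hlen : L.length = ∑ i, μ i := by
    rw [hL, rowsList, List.length_flatMap, Fin.sum_univ_def]
    congr 1
    apply List.map_congr_left
    intro i _
    simp [shifts]
  have hp : 0 < L.length := by
    rw [hlen]
    exact lt_of_lt_of_le hμ0
      (Finset.single_le_sum (fun i _ => Nat.zero_le _) (Finset.mem_univ 0))
  have hpq : L.length ≤ numCols d μ - 1 + 1 := by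
    rw [hlen]
    omega
  have hmem : ∀ Pp ∈ L, ∃ b k, k < μ b ∧ Pp = Polynomial.X ^ k * F b := by
    intro Pp hPp
    rw [hL, rowsList, List.mem_flatMap] at hPp
    obtain ⟨b, _, hPb⟩ := hPp
    rw [shifts, List.mem_map] at hPb
    obtain ⟨j, hj, rfl⟩ := hPb
    exact ⟨b, j, by simpa using hj, rfl⟩
  have hnd : ∀ i : Fin L.length, (L.get i).natDegree < numCols d μ - 1 + 1 := by
    intro i
    obtain ⟨b, j, hjb, hPb⟩ := hmem (L.get i) (List.get_mem L i)
    rw [hPb]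
    have hFb : (F b).natDegree = d b := natDegree_eq_of_degree_eq_some (hdeg b)
    have h1 : (Polynomial.X ^ j * F b).natDegree ≤ j + d b :=
      le_trans (Polynomial.natDegree_mul_le)
        (add_le_add (Polynomial.natDegree_X_pow_le _) hFb.le)
    have hb : d b + μ b ≤ numCols d μ := by
      have h := Finset.le_sup (f := fun i => if μ i = 0 then 0 else d i + μ i)
        (Finset.mem_univ b)
      have h2 : (if μ b = 0 then 0 else d b + μ b) ≤ numCols d μ := h
      rwa [if_neg (by omega)] at h2
    omega
  obtain ⟨c, hc⟩ := dpMat_eq_sum hp hpq (cmList L (numCols d μ - 1)) (fun i => L.get i)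
    (fun i t => rfl) hnd
  choose b k hk hLk using fun i : Fin L.length => hmem (L.get i) (List.get_mem L i)
  refine ⟨fun b' => ∑ i : Fin L.length,
      if b i = b' then Polynomial.C (c i) * Polynomial.X ^ (k i) else 0, ?_, ?_⟩
  · have hR : Rtilde d F μ = dpMat (cmList L (numCols d μ - 1)) := rfl
    rw [hR, hc]
    symm
    calc ∑ b' : Fin (n + 1), (∑ i : Fin L.length,
            if b i = b' then Polynomial.C (c i) * Polynomial.X ^ (k i) else 0) * F b'
        = ∑ b' : Fin (n + 1), ∑ i : Fin L.length,
            (if b i = b' then Polynomial.C (c i) * Polynomial.X ^ (k i) else 0) * F b' :=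
          Finset.sum_congr rfl fun b' _ => Finset.sum_mul _ _ _
      _ = ∑ i : Fin L.length, ∑ b' : Fin (n + 1),
            (if b i = b' then Polynomial.C (c i) * Polynomial.X ^ (k i) else 0) * F b' :=
          Finset.sum_comm
      _ = ∑ i : Fin L.length, Polynomial.C (c i) * Polynomial.X ^ (k i) * F (b i) := by
          refine Finset.sum_congr rfl fun i _ => ?_
          simp [ite_mul]
      _ = ∑ i : Fin L.length, Polynomial.C (c i) * L.get i := by
          refine Finset.sum_congr rfl fun i _ => ?_
          rw [hLk i, mul_assoc]
  · intro b'
    refine lt_of_le_of_lt (Polynomial.degree_sum_le _ _) ?_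
    rw [Finset.sup_lt_iff (by exact WithBot.bot_lt_coe _)]
    intro i _
    by_cases hib : b i = b'
    · rw [if_pos hib]
      refine lt_of_le_of_lt (Polynomial.degree_C_mul_X_pow_le _ _) ?_
      exact_mod_cast hib ▸ hk i
    · rw [if_neg hib]
      rw [Polynomial.degree_zero]
      exact WithBot.bot_lt_coe _
end

section
/- Vanishing lemma: If δ ∈ P(d₀,n) and δ ≻_glex θ, where θ_i = deg gcd(F₀,…,F_{i−1}) − deg gcd(F₀,…,F_i), then R_δ(F) = 0. -/
open Polynomial

/-- gcd in `K[X]` (Euclidean gcd). -/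
noncomputable def pgcd {K : Type*} [Field K] (A B : Polynomial K) : Polynomial K :=
  @EuclideanDomain.gcd _ _ (Classical.decEq _) A B

/-- gcd of `F₀, …, F_i`. -/
noncomputable def gcdFam {K : Type*} [Field K] {n : ℕ} (F : Fin (n + 1) → Polynomial K)
    (i : Fin (n + 1)) : Polynomial K :=
  (List.finRange (n + 1)).foldr (fun j acc => if j ≤ i then pgcd (F j) acc else acc) 0

/-- Graded lexicographic order: `δ ≻ γ`. -/
def glexGT {n : ℕ} (δ γ : Fin n → ℕ) : Prop :=
  (∑ i, γ i < ∑ i, δ i) ∨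
    ((∑ i, δ i = ∑ i, γ i) ∧ ∃ i, γ i < δ i ∧ ∀ j, j < i → δ j = γ j)


/-! ### Auxiliary lemmas -/

section Aux

lemma pgcd_dvd_left' {K : Type*} [Field K] (A B : Polynomial K) : pgcd A B ∣ A :=
  @EuclideanDomain.gcd_dvd_left _ _ (Classical.decEq _) A B

lemma pgcd_dvd_right' {K : Type*} [Field K] (A B : Polynomial K) : pgcd A B ∣ B :=
  @EuclideanDomain.gcd_dvd_right _ _ (Classical.decEq _) A B

lemma dvd_pgcd' {K : Type*} [Field K] {A B C : Polynomial K} (h1 : C ∣ A) (h2 : C ∣ B) :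
    C ∣ pgcd A B :=
  @EuclideanDomain.dvd_gcd _ _ (Classical.decEq _) _ _ _ h1 h2

lemma pgcd_eq_zero_iff' {K : Type*} [Field K] {A B : Polynomial K} :
    pgcd A B = 0 ↔ A = 0 ∧ B = 0 :=
  @EuclideanDomain.gcd_eq_zero_iff _ _ (Classical.decEq _) A B

variable {K : Type*} [Field K] {n : ℕ} (F : Fin (n + 1) → Polynomial K)

private noncomputable def gAux (i : Fin (n + 1)) (l : List (Fin (n + 1))) : Polynomial K :=
  l.foldr (fun j acc => if j ≤ i then pgcd (F j) acc else acc) 0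

lemma gAux_dvd (i : Fin (n + 1)) (l : List (Fin (n + 1))) :
    ∀ j ∈ l, j ≤ i → gAux F i l ∣ F j := by
  induction l with
  | nil => simp
  | cons a l ih =>
    intro j hj hji
    rcases List.mem_cons.mp hj with rfl | hj'
    · simpa [gAux, if_pos hji] using pgcd_dvd_left' (F j) (gAux F i l)
    · by_cases ha : a ≤ i
      · exact dvd_trans (by simpa [gAux, if_pos ha] using pgcd_dvd_right' (F a) (gAux F i l))
          (ih j hj' hji)
      · simpa [gAux, if_neg ha] using ih j hj' hji

lemma dvd_gAux (i : Fin (n + 1)) (l : List (Fin (n + 1))) {C : Polynomial K}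
    (h : ∀ j ∈ l, j ≤ i → C ∣ F j) : C ∣ gAux F i l := by
  induction l with
  | nil => simp [gAux]
  | cons a l ih =>
    by_cases ha : a ≤ i
    · simpa [gAux, if_pos ha] using dvd_pgcd' (h a (by simp) ha)
        (ih fun j hj hji => h j (List.mem_cons_of_mem _ hj) hji)
    · simpa [gAux, if_neg ha] using ih fun j hj hji => h j (List.mem_cons_of_mem _ hj) hji

lemma gAux_ne_zero (i : Fin (n + 1)) (l : List (Fin (n + 1))) {j : Fin (n + 1)}
    (hj : j ∈ l) (hji : j ≤ i) (hF : F j ≠ 0) : gAux F i l ≠ 0 := by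
  induction l with
  | nil => simp at hj
  | cons a l ih =>
    rcases List.mem_cons.mp hj with rfl | hj'
    · simp only [gAux, List.foldr_cons, if_pos hji]
      rw [Ne, pgcd_eq_zero_iff']
      tauto
    · by_cases ha : a ≤ i
      · simp only [gAux, List.foldr_cons, if_pos ha]
        rw [Ne, pgcd_eq_zero_iff']
        exact fun h => ih hj' h.2
      · simpa [gAux, List.foldr_cons, if_neg ha] using ih hj'

lemma gcdFam_dvd {i j : Fin (n + 1)} (hji : j ≤ i) : gcdFam F i ∣ F j :=
  gAux_dvd F i _ j (List.mem_finRange j) hji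

lemma gcdFam_ne_zero (i : Fin (n + 1)) (h0 : F 0 ≠ 0) : gcdFam F i ≠ 0 :=
  gAux_ne_zero F i _ (List.mem_finRange 0) (Fin.zero_le i) h0

lemma dvd_gcdFam {i : Fin (n + 1)} {C : Polynomial K} (h : ∀ j ≤ i, C ∣ F j) :
    C ∣ gcdFam F i :=
  dvd_gAux F i _ fun j _ hji => h j hji

lemma gcdFam_succ_dvd (i : Fin n) : gcdFam F i.succ ∣ gcdFam F i.castSucc :=
  dvd_gcdFam F fun j hj => gcdFam_dvd F (le_trans hj (by
    simp only [Fin.le_def, Fin.coe_castSucc, Fin.val_succ]; omega))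

lemma F0_dvd_gcdFam_zero : F 0 ∣ gcdFam F 0 :=
  dvd_gcdFam F fun j hj => by rw [Fin.le_zero_iff.mp hj]

lemma natDegree_gcdFam_zero (h0 : F 0 ≠ 0) : (gcdFam F 0).natDegree = (F 0).natDegree :=
  le_antisymm (Polynomial.natDegree_le_of_dvd (gcdFam_dvd F le_rfl) h0)
    (Polynomial.natDegree_le_of_dvd (F0_dvd_gcdFam_zero F) (gcdFam_ne_zero F 0 h0))

lemma dpMat_eq_zero {p q : ℕ} (M : Matrix (Fin p) (Fin q) K)
    (c : Fin p → K) (hc : c ≠ 0) (h : ∀ j, ∑ i, c i * M i j = 0) : dpMat M = 0 := by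
  unfold dpMat
  split
  · rfl
  · apply Finset.sum_eq_zero
    intro j _
    have hdet : (M.submatrix id fun k : Fin p =>
        (⟨min (if (k : ℕ) < p - 1 then (k : ℕ) else q - 1 - j) (q - 1), by
          exact lt_of_le_of_lt (min_le_right _ _)
            (Nat.sub_lt (Nat.pos_of_ne_zero (by assumption)) one_pos)⟩ : Fin q)).det = 0 := by
      rw [← Matrix.exists_vecMul_eq_zero_iff]
      refine ⟨c, hc, funext fun j' => ?_⟩
      simp only [Matrix.vecMul, dotProduct, Matrix.submatrix_apply, id_eq]
      exact h _
    rw [hdet]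
    simp

lemma exists_dep (L : List (Polynomial K)) (t : ℕ) (ht : t ≤ L.length)
    (V : Submodule K (Polynomial K)) [Module.Finite K V]
    (hrank : Module.finrank K ↥V < t)
    (hmem : ∀ r : Fin t, L.get ⟨r, lt_of_lt_of_le r.2 ht⟩ ∈ V) :
    ∃ c : Fin L.length → K, c ≠ 0 ∧ ∑ r, c r • L.get r = 0 := by
  set v : Fin t → V := fun r => ⟨L.get ⟨r, lt_of_lt_of_le r.2 ht⟩, hmem r⟩ with hv
  have hnli : ¬ LinearIndependent K v := fun hli =>
    absurd hli.fintype_card_le_finrank (by simpa using hrank.not_ge)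
  obtain ⟨g, hg, i0, hi0⟩ := Fintype.not_linearIndependent_iff.mp hnli
  have hg' : ∑ r : Fin t, g r • L.get ⟨r, lt_of_lt_of_le r.2 ht⟩ = 0 := by
    have := congrArg (Subtype.val) hg
    simpa [hv] using this
  set f : ℕ → Polynomial K := fun i =>
    if h : i < t then g ⟨i, h⟩ • L.get ⟨i, lt_of_lt_of_le h ht⟩ else 0 with hf
  refine ⟨fun r => if h : r.val < t then g ⟨r.val, h⟩ else 0, ?_, ?_⟩
  · intro hzero
    apply hi0
    have := congrFun hzero ⟨i0, lt_of_lt_of_le i0.2 ht⟩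
    simpa using this
  · have step1 : ∑ r : Fin L.length,
        (if h : r.val < t then g ⟨r.val, h⟩ else 0) • L.get r = ∑ r : Fin L.length, f r.val := by
      apply Finset.sum_congr rfl
      intro r _
      by_cases h : r.val < t
      · simp [hf, h]
      · simp [hf, h]
    rw [step1, Fin.sum_univ_eq_sum_range f L.length,
      ← Finset.sum_subset (Finset.range_subset_range.mpr ht) (by
        intro i _ hi
        simp only [Finset.mem_range] at hi
        simp [hf, hi]),
      ← Fin.sum_univ_eq_sum_range f t]
    rw [← hg']
    apply Finset.sum_congr rfl
    intro r _
    simp [hf, r.2]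

lemma length_shifts {R : Type*} [CommRing R] (P : Polynomial R) (t : ℕ) :
    (shifts P t).length = t := by simp [shifts]

lemma mem_shifts {R : Type*} [CommRing R] {P x : Polynomial R} {t : ℕ}
    (hx : x ∈ shifts P t) : ∃ j, j < t ∧ x = Polynomial.X ^ j * P := by
  simp only [shifts, List.mem_map, List.mem_reverse, List.mem_range] at hx
  obtain ⟨j, hj, rfl⟩ := hx
  exact ⟨j, hj, rfl⟩

lemma take_finRange {s N : ℕ} (h : s ≤ N) :
    (List.finRange N).take s = (List.finRange s).map (Fin.castLE h) := by
  apply List.ext_getElem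
  · simp [h]
  · intro i h1 h2
    simp [List.getElem_take, List.getElem_finRange, Fin.castLE]

lemma rowsList_eq_append {R : Type*} [CommRing R] {n : ℕ} (F : Fin (n + 1) → Polynomial R)
    (μ : Fin (n + 1) → ℕ) {s : ℕ} (hs : s ≤ n + 1) :
    rowsList F μ = ((List.finRange s).map (Fin.castLE hs)).flatMap (fun i => shifts (F i) (μ i))
      ++ ((List.finRange (n + 1)).drop s).flatMap (fun i => shifts (F i) (μ i)) := by
  rw [rowsList, ← List.flatMap_append, ← take_finRange hs, List.take_append_drop]

lemma length_block {R : Type*} [CommRing R] {n : ℕ} (F : Fin (n + 1) → Polynomial R)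
    (μ : Fin (n + 1) → ℕ) {s : ℕ} (hs : s ≤ n + 1) :
    (((List.finRange s).map (Fin.castLE hs)).flatMap (fun i => shifts (F i) (μ i))).length
      = ∑ i : Fin s, μ (Fin.castLE hs i) := by
  rw [List.length_flatMap, List.map_map, Fin.sum_univ_def]
  congr 1
  apply List.map_congr_left
  intro i _
  simp [length_shifts]

end Aux

/-- vanishing lemma: if `δ ∈ P(d₀,n)` and `δ ≻_glex θ`, where
`θ_i = deg gcd(F₀,…,F_{i-1}) - deg gcd(F₀,…,F_i)`, then `R_δ(F) = 0`. -/
theorem Rsub_vanishing {K : Type*} [Field K] {n : ℕ} (d : Fin (n + 1) → ℕ)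
    (F : Fin (n + 1) → Polynomial K) (hdeg : ∀ i, (F i).degree = (d i : ℕ))
    (hd : ∀ i, d 0 ≤ d i)
    (θ : Fin n → ℕ)
    (hθ : ∀ i : Fin n,
      θ i = (gcdFam F i.castSucc).natDegree - (gcdFam F i.succ).natDegree)
    (δ : Fin n → ℕ) (hδ : ∑ i, δ i ≤ d 0) (hgt : glexGT δ θ) :
    Rsub d F δ = 0 := by
  classical
  have hF : ∀ i, F i ≠ 0 := by
    intro i h
    have hdi := hdeg i
    rw [h, Polynomial.degree_zero] at hdi
    exact absurd hdi (by simp)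
  have hnd : ∀ i, (F i).natDegree = d i := fun i =>
    Polynomial.natDegree_eq_of_degree_eq_some (hdeg i)
  set gs : ℕ → ℕ := fun s => (gcdFam F ⟨min s n, by omega⟩).natDegree with hgsdef
  have hgs : ∀ (s : ℕ) (p : s < n + 1), (gcdFam F ⟨s, p⟩).natDegree = gs s := by
    intro s p
    have he : (⟨s, p⟩ : Fin (n + 1)) = ⟨min s n, by omega⟩ := Fin.ext (by simp; omega)
    rw [hgsdef, he]
  have hg0 : gs 0 = d 0 := by
    rw [← hgs 0 (by omega)]
    have h0 : (⟨0, by omega⟩ : Fin (n + 1)) = 0 := rfl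
    rw [h0, natDegree_gcdFam_zero F (hF 0), hnd 0]
  have hmono : ∀ s : ℕ, s < n → gs (s + 1) ≤ gs s := by
    intro s hsn
    rw [← hgs s (by omega), ← hgs (s + 1) (by omega)]
    exact Polynomial.natDegree_le_of_dvd
      (gcdFam_succ_dvd F ⟨s, hsn⟩) (gcdFam_ne_zero F _ (hF 0))
  have hθ' : ∀ (s : ℕ) (hsn : s < n), θ ⟨s, hsn⟩ = gs s - gs (s + 1) := by
    intro s hsn
    rw [hθ ⟨s, hsn⟩]
    congr 1
    · exact hgs s (by omega)
    · exact hgs (s + 1) (by omega)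
  have htel : ∀ (s : ℕ) (hs : s ≤ n), gs s + ∑ i : Fin s, θ (Fin.castLE hs i) = d 0 := by
    intro s
    induction s with
    | zero => intro _; simpa using hg0
    | succ s ih =>
      intro hs1
      have hs : s ≤ n := by omega
      rw [Fin.sum_univ_castSucc]
      have esum : ∑ i : Fin s, θ (Fin.castLE hs1 i.castSucc)
          = ∑ i : Fin s, θ (Fin.castLE hs i) := by
        apply Finset.sum_congr rfl
        intro i _
        rfl
      have elast : θ (Fin.castLE hs1 (Fin.last s)) = gs s - gs (s + 1) := hθ' s (by omega)
      rw [esum, elast]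
      have hih := ih hs
      have hmn := hmono s (by omega)
      omega
  obtain ⟨s, hs, hpre⟩ : ∃ (s : ℕ) (hs : s ≤ n),
      (∑ i : Fin s, θ (Fin.castLE hs i)) + 1 ≤ ∑ i : Fin s, δ (Fin.castLE hs i) := by
    rcases hgt with hlt | ⟨hsum, i0, hi0, hpre⟩
    · refine ⟨n, le_rfl, ?_⟩
      have e1 : ∀ (f : Fin n → ℕ), ∑ i : Fin n, f (Fin.castLE le_rfl i) = ∑ i, f i := by
        intro f; apply Finset.sum_congr rfl; intro i _; rfl
      rw [e1, e1]; omega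
    · refine ⟨i0.val + 1, by omega, ?_⟩
      have hs1 : i0.val + 1 ≤ n := by omega
      rw [Fin.sum_univ_castSucc, Fin.sum_univ_castSucc]
      have elast : Fin.castLE hs1 (Fin.last i0.val) = i0 := rfl
      have esum : ∑ i : Fin i0.val, δ (Fin.castLE hs1 i.castSucc)
          = ∑ i : Fin i0.val, θ (Fin.castLE hs1 i.castSucc) := by
        apply Finset.sum_congr rfl
        intro i _
        refine hpre _ ?_
        rw [Fin.lt_def]
        simpa using i.2
      rw [elast, esum]
      omega
  have hδne : ∃ i : Fin n, δ i ≠ 0 := by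
    by_contra hall
    push_neg at hall
    have h1 : ∑ i : Fin s, δ (Fin.castLE hs i) = 0 := Finset.sum_eq_zero fun i _ => hall _
    omega
  obtain ⟨i1, hi1⟩ := hδne
  have hcd : d 0 + 1 ≤ cdelta d δ := by
    have hle : (if δ i1 = 0 then 0 else d i1.succ + δ i1) ≤ cdelta d δ := by
      unfold cdelta
      exact Finset.le_sup (f := fun i : Fin n => if δ i = 0 then 0 else d i.succ + δ i) (Finset.mem_univ i1)
    rw [if_neg hi1] at hle
    have hdd := hd i1.succ
    omega
  set δ0 := delta0 d δ with hδ0def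
  have hδ0 : δ0 = cdelta d δ - d 0 := by
    rw [hδ0def, delta0, if_pos (by omega)]
  have hδ0pos : 1 ≤ δ0 := by omega
  set μ : Fin (n + 1) → ℕ := Fin.cons δ0 δ with hμ
  have hμ0 : μ 0 = δ0 := by rw [hμ]; exact Fin.cons_zero _ _
  have hμs : ∀ i : Fin n, μ i.succ = δ i := fun i => by rw [hμ]; exact Fin.cons_succ _ _ _
  have hcols : ∀ i : Fin (n + 1), μ i ≠ 0 → d i + μ i ≤ numCols d μ := by
    intro i hi
    have hle : (if μ i = 0 then 0 else d i + μ i) ≤ numCols d μ := by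
      unfold numCols
      exact Finset.le_sup (f := fun i : Fin (n+1) => if μ i = 0 then 0 else d i + μ i) (Finset.mem_univ i)
    rwa [if_neg hi] at hle
  have hnum : numCols d μ = d 0 + δ0 := by
    apply le_antisymm
    · unfold numCols
      apply Finset.sup_le
      intro i _
      refine Fin.cases ?_ ?_ i
      · rw [hμ0, if_neg (by omega)]
      · intro i'
        have hle : (if δ i' = 0 then 0 else d i'.succ + δ i') ≤ cdelta d δ := by
          unfold cdelta
          exact Finset.le_sup (f := fun i : Fin n => if δ i = 0 then 0 else d i.succ + δ i) (Finset.mem_univ i')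
        rw [hμs i']
        split
        · omega
        · rw [if_neg (by assumption)] at hle
          omega
    · have hc0 := hcols 0 (by omega)
      rw [hμ0] at hc0
      omega
  have hsn1 : s < n + 1 := by omega
  have hG0 : gcdFam F ⟨s, hsn1⟩ ≠ 0 := gcdFam_ne_zero F _ (hF 0)
  have hGdeg : (gcdFam F ⟨s, hsn1⟩).natDegree = gs s := hgs s hsn1
  have hgsle : gs s ≤ d 0 := by have := htel s hs; omega
  set r := numCols d μ - gs s with hr
  set V : Submodule K (Polynomial K) :=
    (Polynomial.degreeLT K r).map (LinearMap.mulLeft K (gcdFam F ⟨s, hsn1⟩)) with hV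
  haveI : Module.Finite K (Polynomial.degreeLT K r) :=
    Module.Finite.equiv (Polynomial.degreeLTEquiv K r).symm
  haveI : Module.Finite K V := Module.Finite.map _ _
  have hrankV : Module.finrank K ↥V ≤ r := by
    refine le_trans (Submodule.finrank_map_le _ _) ?_
    rw [(Polynomial.degreeLTEquiv K r).finrank_eq, Module.finrank_fin_fun]
  have hs1 : s + 1 ≤ n + 1 := by omega
  set L1 := ((List.finRange (s + 1)).map (Fin.castLE hs1)).flatMap
    (fun i => shifts (F i) (μ i)) with hL1
  set L2 := ((List.finRange (n + 1)).drop (s + 1)).flatMap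
    (fun i => shifts (F i) (μ i)) with hL2
  have hsplit : rowsList F μ = L1 ++ L2 := rowsList_eq_append F μ hs1
  set t := ∑ i : Fin (s + 1), μ (Fin.castLE hs1 i) with htdef
  have hlen1 : L1.length = t := length_block F μ hs1
  have ht : t ≤ (rowsList F μ).length := by rw [hsplit, List.length_append]; omega
  have ht_eq : t = δ0 + ∑ i : Fin s, δ (Fin.castLE hs i) := by
    have e0 : μ (Fin.castLE hs1 0) = δ0 := hμ0
    have e2 : ∑ i : Fin s, μ (Fin.castLE hs1 i.succ) = ∑ i : Fin s, δ (Fin.castLE hs i) :=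
      Finset.sum_congr rfl fun i _ => hμs (Fin.castLE hs i)
    rw [htdef, Fin.sum_univ_succ, e0, e2]
  have htel_s := htel s hs
  have hrt : r < t := by omega
  have hmem : ∀ ro : Fin t, (rowsList F μ).get ⟨ro, lt_of_lt_of_le ro.2 ht⟩ ∈ V := by
    intro ro
    have hro : ro.val < L1.length := by omega
    have hgetelem : (rowsList F μ).get ⟨ro, lt_of_lt_of_le ro.2 ht⟩ = L1[ro.val] := by
      rw [List.get_eq_getElem]
      simp only [hsplit]
      exact List.getElem_append_left hro
    rw [hgetelem]
    have hxmem : L1[ro.val] ∈ ((List.finRange (s + 1)).map (Fin.castLE hs1)).flatMap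
        (fun i => shifts (F i) (μ i)) := by
      rw [← hL1]; exact List.getElem_mem hro
    obtain ⟨a, ha, hx⟩ := List.mem_flatMap.mp hxmem
    obtain ⟨a', -, rfl⟩ := List.mem_map.mp ha
    obtain ⟨j, hj, hxe⟩ := mem_shifts hx
    have haval : (Fin.castLE hs1 a' : Fin (n + 1)) ≤ (⟨s, hsn1⟩ : Fin (n + 1)) := by
      rw [Fin.le_def]
      have := a'.2
      simp only [Fin.coe_castLE]
      omega
    obtain ⟨A, hA⟩ := gcdFam_dvd F haval
    have hAne : A ≠ 0 := by
      intro h; rw [h, mul_zero] at hA; exact hF _ hA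
    have hdegA : (gcdFam F ⟨s, hsn1⟩).natDegree + A.natDegree = d (Fin.castLE hs1 a') := by
      rw [← hnd _, hA, Polynomial.natDegree_mul hG0 hAne]
    have hμa : μ (Fin.castLE hs1 a') ≠ 0 := by omega
    have hcola := hcols _ hμa
    rw [hxe, hV]
    refine Submodule.mem_map.mpr ⟨Polynomial.X ^ j * A, ?_, ?_⟩
    · rw [Polynomial.mem_degreeLT]
      have hne : (Polynomial.X ^ j * A : Polynomial K) ≠ 0 :=
        mul_ne_zero (pow_ne_zero _ Polynomial.X_ne_zero) hAne
      rw [← Polynomial.natDegree_lt_iff_degree_lt hne]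
      have hle2 : (Polynomial.X ^ j * A).natDegree ≤ j + A.natDegree := by
        refine le_trans Polynomial.natDegree_mul_le ?_
        rw [Polynomial.natDegree_X_pow]
      omega
    · rw [LinearMap.mulLeft_apply, hA]; ring
  obtain ⟨c, hc, hcsum⟩ := exists_dep (rowsList F μ) t ht V
    (lt_of_le_of_lt hrankV hrt) hmem
  show dpMat (genMat d F μ) = 0
  apply dpMat_eq_zero _ c hc
  intro j
  calc ∑ i, c i * genMat d F μ i j
      = (∑ i, c i • (rowsList F μ).get i).coeff (numCols d μ - 1 - (j : ℕ)) := by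
        rw [Polynomial.finset_sum_coeff]
        refine Finset.sum_congr rfl fun i _ => ?_
        rw [Polynomial.coeff_smul, smul_eq_mul]
        rfl
    _ = 0 := by rw [hcsum, Polynomial.coeff_zero]
end
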